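/- arXiv:1611.01203 — 2 statements merged into one kernel-verified Lean document; each statement's English description precedes it below -/
import Mathlib

section
/- Let k, d, n be natural numbers with k ≥ 1, d ≥ 0 and n ≥ 2. If n is even, then δ(k,d,n) ≥ 0. -/
def delta (k d n : ℕ) : ℤ :=
  ∑ i ∈ Finset.range (n + 1), ∑ j ∈ Finset.range (n - i + 1),
    (Nat.choose (n + 1) (n - i - j) : ℤ) * (-(k : ℤ)) ^ j * ((d : ℤ) - 1) ^ i

open Finset

lemma tri_reindex (f : ℕ → ℕ → ℤ) (n : ℕ) :
    ∑ i ∈ range (n + 1), ∑ j ∈ range (n - i + 1), f i j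
      = ∑ s ∈ range (n + 1), ∑ p ∈ range (s + 1), f p (s - p) := by
  rw [Finset.sum_sigma', Finset.sum_sigma']
  apply Finset.sum_nbij' (i := fun a => ⟨a.1 + a.2, a.1⟩) (j := fun a => ⟨a.2, a.1 - a.2⟩)
  · rintro ⟨i, j⟩ h
    simp only [Finset.mem_sigma, Finset.mem_range] at h ⊢
    omega
  · rintro ⟨s, p⟩ h
    simp only [Finset.mem_sigma, Finset.mem_range] at h ⊢
    omega
  · rintro ⟨i, j⟩ h
    simp
  · rintro ⟨s, p⟩ h
    simp only [Finset.mem_sigma, Finset.mem_range] at h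
    simp only [Sigma.mk.inj_iff, heq_eq_eq]
    exact ⟨by omega, trivial⟩
  · rintro ⟨i, j⟩ h
    simp

lemma sumB (x : ℤ) (n : ℕ) :
    ∑ s ∈ range (n + 1), (Nat.choose (n + 1) (n - s) : ℤ) * x ^ (s + 1)
      = (x + 1) ^ (n + 1) - 1 := by
  have h := add_pow x 1 (n + 1)
  simp only [one_pow, mul_one] at h
  rw [h, Finset.sum_range_succ' (fun m => x ^ m * ((n + 1).choose m : ℤ)) (n + 1)]
  simp only [pow_zero, Nat.choose_zero_right, Nat.cast_one, one_mul, add_sub_cancel_right]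
  apply Finset.sum_congr rfl
  intro s hs
  rw [Finset.mem_range] at hs
  have : (n + 1).choose (n - s) = (n + 1).choose (s + 1) := by
    rw [show n - s = (n + 1) - (s + 1) by omega]
    exact Nat.choose_symm (by omega)
  rw [this]; ring

lemma key (x y : ℤ) (n : ℕ) :
    (x - y) * (∑ i ∈ range (n + 1), ∑ j ∈ range (n - i + 1),
        (Nat.choose (n + 1) (n - i - j) : ℤ) * y ^ j * x ^ i)
      = (x + 1) ^ (n + 1) - (y + 1) ^ (n + 1) := by
  rw [tri_reindex (fun i j => (Nat.choose (n + 1) (n - i - j) : ℤ) * y ^ j * x ^ i) n]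
  have step1 : ∀ s ∈ range (n + 1),
      (∑ p ∈ range (s + 1), (Nat.choose (n + 1) (n - p - (s - p)) : ℤ) * y ^ (s - p) * x ^ p)
        = (Nat.choose (n + 1) (n - s) : ℤ) * ∑ p ∈ range (s + 1), x ^ p * y ^ (s - p) := by
    intro s hs
    rw [Finset.mul_sum]
    apply Finset.sum_congr rfl
    intro p hp
    rw [Finset.mem_range] at hp
    rw [show n - p - (s - p) = n - s by omega]
    ring
  rw [Finset.sum_congr rfl step1, Finset.mul_sum]
  have step2 : ∀ s ∈ range (n + 1),
      (x - y) * ((Nat.choose (n + 1) (n - s) : ℤ) * ∑ p ∈ range (s + 1), x ^ p * y ^ (s - p))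
        = (Nat.choose (n + 1) (n - s) : ℤ) * x ^ (s + 1)
          - (Nat.choose (n + 1) (n - s) : ℤ) * y ^ (s + 1) := by
    intro s _
    have hg := geom_sum₂_mul x y (s + 1)
    simp only [Nat.add_sub_cancel] at hg
    rw [mul_left_comm, mul_comm (x - y), hg]
    ring
  rw [Finset.sum_congr rfl step2, Finset.sum_sub_distrib, sumB, sumB]
  ring

lemma delta_one_zero (n : ℕ) (hn : 2 ≤ n) (heven : Even n) : delta 1 0 n = 0 := by
  have h1 : delta 1 0 n = ∑ i ∈ range (n + 1), ∑ j ∈ range (n - i + 1),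
      (Nat.choose (n + 1) (n - i - j) : ℤ) * (-1 : ℤ) ^ j * (-1 : ℤ) ^ i := by
    unfold delta
    norm_num
  rw [h1, tri_reindex (fun i j => (Nat.choose (n + 1) (n - i - j) : ℤ) * (-1 : ℤ) ^ j
      * (-1 : ℤ) ^ i) n]
  have hinner : ∀ s ∈ range (n + 1),
      (∑ p ∈ range (s + 1),
        (Nat.choose (n + 1) (n - p - (s - p)) : ℤ) * (-1 : ℤ) ^ (s - p) * (-1 : ℤ) ^ p)
      = ((s : ℤ) + 1) * ((Nat.choose (n + 1) (n - s) : ℤ) * (-1 : ℤ) ^ s) := by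
    intro s hs
    have hterm : ∀ p ∈ range (s + 1),
        (Nat.choose (n + 1) (n - p - (s - p)) : ℤ) * (-1 : ℤ) ^ (s - p) * (-1 : ℤ) ^ p
          = (Nat.choose (n + 1) (n - s) : ℤ) * (-1 : ℤ) ^ s := by
      intro p hp
      rw [Finset.mem_range] at hp
      rw [show n - p - (s - p) = n - s by omega, mul_assoc, ← pow_add,
        show s - p + p = s by omega]
    rw [Finset.sum_congr rfl hterm, Finset.sum_const, Finset.card_range, nsmul_eq_mul]
    push_cast
    ring
  rw [Finset.sum_congr rfl hinner]
  set F : ℕ → ℤ := fun s => ((s : ℤ) + 1) * ((Nat.choose (n + 1) (n - s) : ℤ) * (-1 : ℤ) ^ s)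
    with hF
  have hrefl := Finset.sum_range_reflect F (n + 1)
  simp only [Nat.add_sub_cancel] at hrefl
  rw [← hrefl]
  have hterm2 : ∀ t ∈ range (n + 1),
      F (n - t) = ((n : ℤ) + 1) * ((-1 : ℤ) ^ t * (Nat.choose n t : ℤ)) := by
    intro t ht
    rw [Finset.mem_range] at ht
    have htn : t ≤ n := by omega
    have hpow : (-1 : ℤ) ^ (n - t) = (-1 : ℤ) ^ t := by
      rcases Nat.even_or_odd t with h | h
      · have h2 : Even (n - t) := by
          obtain ⟨a, ha⟩ := heven; obtain ⟨b, hb⟩ := h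
          exact ⟨a - b, by omega⟩
        rw [h.neg_one_pow, h2.neg_one_pow]
      · have h2 : Odd (n - t) := by
          obtain ⟨a, ha⟩ := heven; obtain ⟨b, hb⟩ := h
          exact ⟨a - b - 1, by omega⟩
        rw [h.neg_one_pow, h2.neg_one_pow]
    have hZ : (((n - t : ℕ) : ℤ) + 1) * ((n + 1).choose t : ℤ)
        = ((n : ℤ) + 1) * (n.choose t : ℤ) := by
      have hnat : ((n - t) + 1) * ((n + 1).choose t) = (n + 1) * n.choose t := by
        rw [mul_comm ((n - t) + 1), show (n - t) + 1 = n + 1 - t from by omega,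
          ← Nat.choose_mul_succ_eq]
        ring
      exact_mod_cast hnat
    rw [hF]
    simp only []
    rw [show n - (n - t) = t by omega, hpow]
    calc (((n - t : ℕ) : ℤ) + 1) * (((n + 1).choose t : ℤ) * (-1 : ℤ) ^ t)
        = ((((n - t : ℕ) : ℤ) + 1) * ((n + 1).choose t : ℤ)) * (-1 : ℤ) ^ t := by ring
      _ = (((n : ℤ) + 1) * (n.choose t : ℤ)) * (-1 : ℤ) ^ t := by rw [hZ]
      _ = ((n : ℤ) + 1) * ((-1 : ℤ) ^ t * (n.choose t : ℤ)) := by ring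
  rw [Finset.sum_congr rfl hterm2, ← Finset.mul_sum,
    Int.alternating_sum_range_choose_of_ne (by omega : n ≠ 0), mul_zero]

theorem delta_nonneg_of_even (k d n : ℕ) (hk : 1 ≤ k) (hn : 2 ≤ n) (heven : Even n) :
    0 ≤ delta k d n := by
  have hkey : ((d : ℤ) - 1 - (-(k : ℤ))) * delta k d n
      = ((d : ℤ) - 1 + 1) ^ (n + 1) - (-(k : ℤ) + 1) ^ (n + 1) := key ((d : ℤ) - 1) (-(k : ℤ)) n
  have hodd : Odd (n + 1) := Even.add_one heven
  have hk' : (1 : ℤ) ≤ (k : ℤ) := by exact_mod_cast hk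
  have hd' : (0 : ℤ) ≤ (d : ℤ) := Int.ofNat_nonneg d
  rcases lt_or_eq_of_le (show (0 : ℤ) ≤ (d : ℤ) - 1 - (-(k : ℤ)) by linarith) with hpos | hzero
  · have hrhs : 0 ≤ ((d : ℤ) - 1 + 1) ^ (n + 1) - (-(k : ℤ) + 1) ^ (n + 1) := by
      have h1 : (0 : ℤ) ≤ ((d : ℤ) - 1 + 1) ^ (n + 1) := by
        rw [show (d : ℤ) - 1 + 1 = (d : ℤ) by ring]
        positivity
      have h2 : (-(k : ℤ) + 1) ^ (n + 1) ≤ 0 := Odd.pow_nonpos hodd (by linarith)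
      linarith
    rw [← hkey] at hrhs
    by_contra hneg
    push_neg at hneg
    have := mul_neg_of_pos_of_neg hpos hneg
    linarith
  · have hdk : d = 0 ∧ k = 1 := by
      constructor <;> omega
    obtain ⟨hd0, hk1⟩ := hdk
    subst hd0; subst hk1
    rw [delta_one_zero n hn heven]
end

section
/- Let k, d, n be natural numbers with k ≥ 1, d ≥ 0 and n ≥ 2. Then δ(k,d,n) = Σ_{i=0}^{n} (−1)^i · (k−1)^i · d^{n−i}, where both sides are computed in the integers. -/
open Finset

/-- Reindexing the triangular sum by `s = i + j`. -/
lemma lemA (x y : ℤ) (n : ℕ) :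
    (∑ i ∈ range (n + 1), ∑ j ∈ range (n - i + 1),
        (Nat.choose (n + 1) (n - i - j) : ℤ) * y ^ j * x ^ i)
      = ∑ s ∈ range (n + 1), (Nat.choose (n + 1) (n - s) : ℤ) *
          ∑ i ∈ range (s + 1), x ^ i * y ^ (s - i) := by
  rw [Finset.sum_sigma' (range (n+1)) (fun i => range (n - i + 1))
        (fun i j => (Nat.choose (n + 1) (n - i - j) : ℤ) * y ^ j * x ^ i)]
  simp_rw [Finset.mul_sum]
  rw [Finset.sum_sigma' (range (n+1)) (fun s => range (s + 1))
        (fun s i => (Nat.choose (n + 1) (n - s) : ℤ) * (x ^ i * y ^ (s - i)))]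
  refine Finset.sum_nbij' (fun p => ⟨p.1 + p.2, p.1⟩) (fun q => ⟨q.2, q.1 - q.2⟩) ?_ ?_ ?_ ?_ ?_
  · rintro ⟨i, j⟩ h
    simp only [mem_sigma, mem_range] at h ⊢
    omega
  · rintro ⟨s, i⟩ h
    simp only [mem_sigma, mem_range] at h ⊢
    omega
  · rintro ⟨i, j⟩ h
    simp only [mem_sigma, mem_range] at h
    simp only [Sigma.mk.inj_iff, heq_eq_eq]
    exact ⟨trivial, by omega⟩
  · rintro ⟨s, i⟩ h
    simp only [mem_sigma, mem_range] at h
    simp only [Sigma.mk.inj_iff, heq_eq_eq]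
    exact ⟨by omega, trivial⟩
  · rintro ⟨i, j⟩ h
    simp only [mem_sigma, mem_range] at h
    have h1 : n - i - j = n - (i + j) := by omega
    have h2 : i + j - i = j := by omega
    rw [h1, h2]
    ring

lemma lemC (x : ℤ) (n : ℕ) :
    (∑ s ∈ range (n + 1), (Nat.choose (n + 1) (n - s) : ℤ) * x ^ (s + 1))
      = (x + 1) ^ (n + 1) - 1 := by
  have h : (∑ t ∈ range (n + 2), (Nat.choose (n + 1) (n + 1 - t) : ℤ) * x ^ t)
      = (x + 1) ^ (n + 1) := by
    have := add_pow x (1 : ℤ) (n + 1)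
    simp only [one_pow, mul_one] at this
    rw [this]
    refine Finset.sum_congr rfl fun t ht => ?_
    rw [mem_range] at ht
    rw [Nat.choose_symm (by omega : t ≤ n + 1), mul_comm]
  rw [Finset.sum_range_succ' _ (n + 1)] at h
  simp only [Nat.sub_zero, Nat.choose_self, pow_zero, Nat.cast_one, mul_one] at h
  have : ∀ s ∈ range (n + 1), (Nat.choose (n + 1) (n + 1 - (s + 1)) : ℤ) * x ^ (s + 1)
      = (Nat.choose (n + 1) (n - s) : ℤ) * x ^ (s + 1) := by
    intro s hs
    have h2 : n + 1 - (s + 1) = n - s := by omega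
    rw [h2]
  rw [Finset.sum_congr rfl this] at h
  linarith

lemma lemB (x y : ℤ) (n : ℕ) :
    (x - y) * (∑ s ∈ range (n + 1), (Nat.choose (n + 1) (n - s) : ℤ) *
        ∑ i ∈ range (s + 1), x ^ i * y ^ (s - i))
      = (x + 1) ^ (n + 1) - (y + 1) ^ (n + 1) := by
  rw [Finset.mul_sum]
  have h : ∀ s ∈ range (n + 1),
      (x - y) * ((Nat.choose (n + 1) (n - s) : ℤ) * ∑ i ∈ range (s + 1), x ^ i * y ^ (s - i))
      = (Nat.choose (n + 1) (n - s) : ℤ) * x ^ (s + 1)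
        - (Nat.choose (n + 1) (n - s) : ℤ) * y ^ (s + 1) := by
    intro s _
    have hg := geom_sum₂_mul x y (s + 1)
    simp only [Nat.add_sub_cancel] at hg
    calc (x - y) * ((Nat.choose (n + 1) (n - s) : ℤ) * ∑ i ∈ range (s + 1), x ^ i * y ^ (s - i))
        = (Nat.choose (n + 1) (n - s) : ℤ) *
            ((∑ i ∈ range (s + 1), x ^ i * y ^ (s - i)) * (x - y)) := by ring
      _ = _ := by rw [hg]; ring
  rw [Finset.sum_congr rfl h, Finset.sum_sub_distrib, lemC, lemC]
  ring

lemma lemT (n : ℕ) (hn : 1 ≤ n) :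
    ∑ s ∈ range (n + 1), (Nat.choose (n + 1) (n - s) : ℤ) * (((s : ℤ) + 1) * (-1) ^ s) = 0 := by
  have hrefl := Finset.sum_range_reflect
      (fun s => (Nat.choose (n + 1) (n - s) : ℤ) * (((s : ℤ) + 1) * (-1) ^ s)) (n + 1)
  rw [← hrefl]
  have h : ∀ j ∈ range (n + 1),
      (Nat.choose (n + 1) (n - (n + 1 - 1 - j)) : ℤ) *
          ((((n + 1 - 1 - j : ℕ) : ℤ) + 1) * (-1) ^ (n + 1 - 1 - j))
      = (((n : ℤ) + 1) * (-1) ^ n) * ((-1) ^ j * (Nat.choose n j : ℤ)) := by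
    intro j hj
    rw [mem_range] at hj
    have h1 : n + 1 - 1 - j = n - j := by omega
    have h2 : n - (n - j) = j := by omega
    rw [h1, h2]
    have h6 : (n + 1 - j) * ((n + 1).choose j) = (n + 1) * (n.choose j) := by
      rw [mul_comm (n + 1 - j) _, ← Nat.choose_mul_succ_eq, mul_comm]
    have h3 : (((n - j : ℕ) : ℤ) + 1) * (Nat.choose (n + 1) j : ℤ)
        = ((n : ℤ) + 1) * (Nat.choose n j : ℤ) := by
      have h4 : ((n - j : ℕ) : ℤ) + 1 = ((n + 1 - j : ℕ) : ℤ) := by omega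
      rw [h4]
      exact_mod_cast h6
    have h5 : ((-1 : ℤ)) ^ (n - j) = (-1) ^ n * (-1) ^ j := by
      have : (-1 : ℤ) ^ (n - j) = (-1) ^ (n + j) := by
        rw [show n + j = (n - j) + 2 * j by omega, pow_add, pow_mul]
        simp
      rw [this, pow_add]
    rw [h5]
    calc (Nat.choose (n + 1) j : ℤ) * ((((n - j : ℕ) : ℤ) + 1) * ((-1) ^ n * (-1) ^ j))
        = ((((n - j : ℕ) : ℤ) + 1) * (Nat.choose (n + 1) j : ℤ)) * ((-1) ^ n * (-1) ^ j) := by ring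
      _ = _ := by rw [h3]; ring
  calc (∑ j ∈ range (n + 1), (Nat.choose (n + 1) (n - (n + 1 - 1 - j)) : ℤ) *
          (((((n + 1 - 1 - j : ℕ) : ℤ)) + 1) * (-1) ^ (n + 1 - 1 - j)))
      = ∑ j ∈ range (n + 1), (((n : ℤ) + 1) * (-1) ^ n) * ((-1) ^ j * (Nat.choose n j : ℤ)) :=
        Finset.sum_congr rfl h
    _ = (((n : ℤ) + 1) * (-1) ^ n) * ∑ j ∈ range (n + 1), (-1) ^ j * (Nat.choose n j : ℤ) := by
        rw [Finset.mul_sum]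
    _ = 0 := by rw [Int.alternating_sum_range_choose_of_ne (by omega : n ≠ 0)]; ring

lemma lemS (n : ℕ) (hn : 1 ≤ n) : delta 1 0 n = 0 := by
  have h0 : delta 1 0 n
      = ∑ i ∈ range (n + 1), ∑ j ∈ range (n - i + 1),
          (Nat.choose (n + 1) (n - i - j) : ℤ) * (-1 : ℤ) ^ j * (-1 : ℤ) ^ i := by
    unfold delta
    norm_num
  rw [h0, lemA (-1) (-1) n]
  have h1 : ∀ s ∈ range (n + 1),
      (Nat.choose (n + 1) (n - s) : ℤ) * ∑ i ∈ range (s + 1), (-1 : ℤ) ^ i * (-1 : ℤ) ^ (s - i)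
      = (Nat.choose (n + 1) (n - s) : ℤ) * (((s : ℤ) + 1) * (-1) ^ s) := by
    intro s _
    congr 1
    have h2 : ∀ i ∈ range (s + 1), (-1 : ℤ) ^ i * (-1 : ℤ) ^ (s - i) = (-1 : ℤ) ^ s := by
      intro i hi
      rw [mem_range] at hi
      rw [← pow_add, show i + (s - i) = s by omega]
    rw [Finset.sum_congr rfl h2, Finset.sum_const, card_range, nsmul_eq_mul]
    push_cast
    ring
  rw [Finset.sum_congr rfl h1]
  exact lemT n hn

theorem delta_eq_alt_sum (k d n : ℕ) (hk : 1 ≤ k) (hn : 2 ≤ n) :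
    delta k d n =
      ∑ i ∈ Finset.range (n + 1), (-1 : ℤ) ^ i * ((k : ℤ) - 1) ^ i * (d : ℤ) ^ (n - i) := by
  have hR : (∑ i ∈ Finset.range (n + 1), (-1 : ℤ) ^ i * ((k : ℤ) - 1) ^ i * (d : ℤ) ^ (n - i))
      = ∑ i ∈ range (n + 1), (1 - (k : ℤ)) ^ i * (d : ℤ) ^ (n - i) := by
    refine Finset.sum_congr rfl fun i _ => ?_
    rw [← neg_pow, neg_sub]
  by_cases hc : (d : ℤ) - 1 + k = 0
  · have hd : d = 0 := by omega
    have hk1 : k = 1 := by omega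
    subst hd; subst hk1
    rw [lemS n (by omega)]
    symm
    refine Finset.sum_eq_zero fun i hi => ?_
    rcases Nat.eq_zero_or_pos i with h | h
    · subst h
      simp [zero_pow (show n - 0 ≠ 0 by omega), show ¬ n = 0 by omega]
    · simp [zero_pow (by omega : i ≠ 0)]
  · have hmul1 : ((d : ℤ) - 1 + k) * delta k d n
        = (d : ℤ) ^ (n + 1) - (1 - (k : ℤ)) ^ (n + 1) := by
      unfold delta
      rw [lemA ((d : ℤ) - 1) (-(k : ℤ)) n]
      have := lemB ((d : ℤ) - 1) (-(k : ℤ)) n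
      rw [show (d : ℤ) - 1 - -(k : ℤ) = (d : ℤ) - 1 + k by ring] at this
      rw [this]
      ring_nf
    have hmul2 : ((d : ℤ) - 1 + k) *
        (∑ i ∈ range (n + 1), (1 - (k : ℤ)) ^ i * (d : ℤ) ^ (n - i))
        = (d : ℤ) ^ (n + 1) - (1 - (k : ℤ)) ^ (n + 1) := by
      have hg := geom_sum₂_mul (1 - (k : ℤ)) (d : ℤ) (n + 1)
      simp only [Nat.add_sub_cancel] at hg
      linear_combination -hg
    rw [hR]
    exact mul_left_cancel₀ hc (hmul1.trans hmul2.symm)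
end
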